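/- arXiv:1210.7954 — 4 statements merged into one kernel-verified Lean document; each statement's English description precedes it below -/
import Mathlib

section
/- Let n ≥ 1 and let x_1,…,x_n be nonnegative reals with average L̄ = (Σ x_i)/n ≥ 1. Fix j and suppose x_j ≤ (α+2)·L̄ for a real α > 0. Let c > 0. Then the change in potential Φ = c·(Σ x_i²)/L̄ caused by increasing x_j by 1 (which also increases L̄ by 1/n) is at most c·(2α+5). That is, c·(Σ_{i≠j} x_i² + (x_j+1)²)/(L̄ + 1/n) − c·(Σ x_i²)/L̄ ≤ c·(2α+5). -/
/-!
Raising `x j` by one raises `∑ xᵢ²` by `2 xⱼ + 1`, and the simultaneous growth of the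
denominator `L̄` can only lower the new potential. So the change is at most `c (2 xⱼ + 1) / L̄`,
which the invariant `xⱼ ≤ (α + 2) L̄` together with `L̄ ≥ 1` bounds by `c (2α + 5)`.
-/

theorem Finset.sum_erase_add_add_one_sq {ι R : Type*} [CommRing R] [DecidableEq ι]
    {s : Finset ι} {j : ι} (hj : j ∈ s) (f : ι → R) :
    ∑ i ∈ s.erase j, f i ^ 2 + (f j + 1) ^ 2 = ∑ i ∈ s, f i ^ 2 + (2 * f j + 1) := by
  rw [← Finset.sum_erase_add s _ hj]
  ring

theorem two_mul_add_one_div_le {a α L : ℝ} (hL : 1 ≤ L) (ha : a ≤ (α + 2) * L) :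
    (2 * a + 1) / L ≤ 2 * α + 5 := by
  have hL0 : 0 < L := one_pos.trans_le hL
  rw [div_le_iff₀ hL0]
  nlinarith

theorem stmt_13_general (n : ℕ) (x : Fin n → ℝ)
    (α c Lbar : ℝ) (hc : 0 < c)
    (hL1 : 1 ≤ Lbar)
    (j : Fin n) (hj : x j ≤ (α + 2) * Lbar) :
    c * ((∑ i ∈ Finset.univ.erase j, (x i) ^ 2) + (x j + 1) ^ 2) / (Lbar + 1 / n)
      - c * (∑ i, (x i) ^ 2) / Lbar ≤ c * (2 * α + 5) := by
  have hL : 0 < Lbar := one_pos.trans_le hL1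
  have hnum : 0 ≤ c * ((∑ i ∈ Finset.univ.erase j, (x i) ^ 2) + (x j + 1) ^ 2) :=
    mul_nonneg hc.le (by positivity)
  calc _ ≤ c * ((∑ i ∈ Finset.univ.erase j, (x i) ^ 2) + (x j + 1) ^ 2) / Lbar
          - c * (∑ i, (x i) ^ 2) / Lbar := by
        gcongr
        exact le_add_of_nonneg_right (by positivity)
    _ = c * ((2 * x j + 1) / Lbar) := by
        rw [Finset.sum_erase_add_add_one_sq (Finset.mem_univ j)]
        field_simp
        ring
    _ ≤ c * (2 * α + 5) := by gcongr; exact two_mul_add_one_div_le hL1 hj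

theorem stmt_13 (n : ℕ) (hn : 1 ≤ n) (x : Fin n → ℝ) (hx : ∀ i, 0 ≤ x i)
    (α c Lbar : ℝ) (hα : 0 < α) (hc : 0 < c)
    (hLbar : Lbar = (∑ i, x i) / n) (hL1 : 1 ≤ Lbar)
    (j : Fin n) (hj : x j ≤ (α + 2) * Lbar) :
    c * ((∑ i ∈ Finset.univ.erase j, (x i) ^ 2) + (x j + 1) ^ 2) / (Lbar + 1 / n)
      - c * (∑ i, (x i) ^ 2) / Lbar ≤ c * (2 * α + 5) :=
  stmt_13_general n x α c Lbar hc hL1 j hj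
end

section
/- Let α > 2(1+√3) and c > 2α²(α+2)/(α² − 4(α+2)) be reals. Let L̄ ≥ 1, and let a, b, d be nonnegative reals (the loads of N_j, N_k, N_l) with b ≤ a/α, d ≤ (α+2)·a/α, and L̄ ≤ (α+2)·a. Then c·(a²/2 − 2bd)/L̄ ≥ a. -/
/-!
Since `b ≤ a/α` and `d ≤ (α+2)a/α`, the product `bd` is at most `(α+2)a²/α²`, so the drop
`a²/2 - 2bd` is at least `a²(α² - 4(α+2))/(2α²)`, which is positive because `α > 2 + 2√3` is the
larger root of `α² - 4α - 8`. The bound on `c` makes `c` times this at least `(α+2)a² ≥ a·L̄`.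
-/

theorem sq_sub_four_mul_add_two_pos {α : ℝ} (hα : 2 * (1 + Real.sqrt 3) < α) :
    0 < α ^ 2 - 4 * (α + 2) := by
  have h3 : Real.sqrt 3 ^ 2 = 3 := Real.sq_sqrt (by norm_num)
  nlinarith [Real.sqrt_nonneg 3]

theorem mul_le_add_two_mul_sq_div_sq {α a b d : ℝ} (hα : 0 < α) (ha : 0 ≤ a) (hd0 : 0 ≤ d)
    (hb : b ≤ a / α) (hd : d ≤ (α + 2) * a / α) :
    b * d ≤ (α + 2) * a ^ 2 / α ^ 2 :=
  calc b * d ≤ a / α * ((α + 2) * a / α) := mul_le_mul hb hd hd0 (by positivity)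
    _ = (α + 2) * a ^ 2 / α ^ 2 := by ring

theorem add_two_mul_sq_le_mul_sub {α c a b d : ℝ} (hα : 0 < α) (hK : 0 < α ^ 2 - 4 * (α + 2))
    (hc : 2 * α ^ 2 * (α + 2) / (α ^ 2 - 4 * (α + 2)) < c)
    (hbd : b * d ≤ (α + 2) * a ^ 2 / α ^ 2) :
    (α + 2) * a ^ 2 ≤ c * (a ^ 2 / 2 - 2 * b * d) := by
  have hcK : 2 * α ^ 2 * (α + 2) < c * (α ^ 2 - 4 * (α + 2)) := (div_lt_iff₀ hK).mp hc
  have hc0 : 0 < c := pos_of_mul_pos_left (lt_trans (by positivity) hcK) hK.le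
  calc (α + 2) * a ^ 2 = 2 * α ^ 2 * (α + 2) * (a ^ 2 / (2 * α ^ 2)) := by field_simp
    _ ≤ c * (α ^ 2 - 4 * (α + 2)) * (a ^ 2 / (2 * α ^ 2)) := by gcongr
    _ = c * (a ^ 2 / 2 - 2 * ((α + 2) * a ^ 2 / α ^ 2)) := by field_simp; ring
    _ ≤ c * (a ^ 2 / 2 - 2 * b * d) := mul_le_mul_of_nonneg_left (by linarith) hc0.le

theorem stmt_14_general (α c Lbar a b d : ℝ) (hα : 2 * (1 + Real.sqrt 3) < α)
    (hc : 2 * α ^ 2 * (α + 2) / (α ^ 2 - 4 * (α + 2)) < c)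
    (hLbar : 1 ≤ Lbar) (ha : 0 ≤ a) (hd0 : 0 ≤ d)
    (hb : b ≤ a / α) (hd : d ≤ (α + 2) * a / α) (hL : Lbar ≤ (α + 2) * a) :
    c * (a ^ 2 / 2 - 2 * b * d) / Lbar ≥ a := by
  have hα0 : 0 < α := lt_of_le_of_lt (by positivity) hα
  have hdrop := add_two_mul_sq_le_mul_sub hα0 (sq_sub_four_mul_add_two_pos hα) hc
    (mul_le_add_two_mul_sq_div_sq hα0 ha hd0 hb hd)
  rw [ge_iff_le, le_div_iff₀ (by linarith)]
  calc a * Lbar ≤ a * ((α + 2) * a) := mul_le_mul_of_nonneg_left hL ha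
    _ = (α + 2) * a ^ 2 := by ring
    _ ≤ _ := hdrop

theorem stmt_14 (α c Lbar a b d : ℝ) (hα : 2 * (1 + Real.sqrt 3) < α)
    (hc : 2 * α ^ 2 * (α + 2) / (α ^ 2 - 4 * (α + 2)) < c)
    (hLbar : 1 ≤ Lbar) (ha : 0 ≤ a) (hb0 : 0 ≤ b) (hd0 : 0 ≤ d)
    (hb : b ≤ a / α) (hd : d ≤ (α + 2) * a / α) (hL : Lbar ≤ (α + 2) * a) :
    c * (a ^ 2 / 2 - 2 * b * d) / Lbar ≥ a :=
  stmt_14_general α c Lbar a b d hα hc hLbar ha hd0 hb hd hL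
end

section
/- Let β > 2√2 and c > 2β²/(β² − 8) be reals. Suppose nonnegative loads a, b, d satisfy a ≤ Max/β, b ≤ 2·Max/β, d = Max, and L̄ ≤ Max, with Max > 0. Then c·(d²/2 − 2ab)/L̄ ≥ d. -/
theorem stmt_16 (β c Max Lbar a b d : ℝ) (hβ : 2 * Real.sqrt 2 < β)
    (hc : 2 * β ^ 2 / (β ^ 2 - 8) < c)
    (hMax : 0 < Max) (hLbar0 : 0 < Lbar)
    (ha0 : 0 ≤ a) (hb0 : 0 ≤ b) (hd0 : 0 ≤ d)
    (ha : a ≤ Max / β) (hb : b ≤ 2 * Max / β) (hd : d = Max) (hL : Lbar ≤ Max) :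
    c * (d ^ 2 / 2 - 2 * a * b) / Lbar ≥ d := by
  have hβ0 : 0 < β := lt_trans (by positivity) hβ
  have hβ2 : 8 < β ^ 2 := by
    nlinarith [Real.sq_sqrt (show (0:ℝ) ≤ 2 by norm_num), Real.sqrt_nonneg 2]
  have hc' : 2 * β ^ 2 < c * (β ^ 2 - 8) := by
    have := (div_lt_iff₀ (by linarith)).mp hc
    linarith
  have hc0 : 0 < c := lt_trans (div_pos (by positivity) (by linarith)) hc
  have h1 : a * β ≤ Max := by
    rw [← le_div_iff₀ hβ0]; exact ha
  have h2 : b * β ≤ 2 * Max := (le_div_iff₀ hβ0).mp hb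
  have hab : a * b * β ^ 2 ≤ 2 * Max ^ 2 := by
    nlinarith [mul_le_mul h1 h2 (by positivity) (le_of_lt hMax)]
  rw [ge_iff_le, le_div_iff₀ hLbar0, hd]
  have key : Max ^ 2 * (β ^ 2 - 8) / (2 * β ^ 2) ≤ Max ^ 2 / 2 - 2 * a * b := by
    rw [div_le_iff₀ (by positivity)]
    nlinarith
  nlinarith [mul_le_mul_of_nonneg_left key (le_of_lt hc0), mul_pos hMax hMax,
    mul_le_mul_of_nonneg_left hL (le_of_lt hMax)]
end

section
/- Consider a sequence of nonnegative integer loads updated as follows: an insertion at the current node either increments it, or (if after increment the load exceeds α times the current minimum m) replaces the load by its ceiling-half, where before the update the load was at most (α+2)m + 1. If α ≥ 3 and the minimum m never decreases, then after every insertion event the updated node's load is at most α times the current minimum. -/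
lemma ceil_half_nat (n : ℕ) : ⌈((n : ℝ)) / 2⌉ = ((n + 1) / 2 : ℕ) := by
  rw [Int.ceil_eq_iff]
  have h := Nat.div_add_mod (n + 1) 2
  have hmod : (n + 1) % 2 < 2 := Nat.mod_lt _ (by norm_num)
  constructor
  · push_cast
    have : ((n + 1) / 2 : ℕ) * 2 ≤ n + 1 := by omega
    rify at this
    linarith
  · push_cast
    have : n ≤ ((n + 1) / 2 : ℕ) * 2 := by omega
    rify at this
    linarith

theorem stmt_19 (α : ℝ) (hα : 3 ≤ α) (L m m' L' : ℕ) (hm : 1 ≤ m)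
    (hmono : m ≤ m')
    (hinv : (L : ℝ) + 1 ≤ (α + 2) * m + 1)
    (hcase : ((L : ℝ) + 1 ≤ α * m ∧ L' = L + 1) ∨
      (α * m < (L : ℝ) + 1 ∧ (L' : ℤ) = ⌈((L : ℝ) + 1) / 2⌉)) :
    (L' : ℝ) ≤ α * m' := by
  have hmm' : (m : ℝ) ≤ (m' : ℝ) := by exact_mod_cast hmono
  have hαm : α * m ≤ α * m' := by nlinarith
  rcases hcase with ⟨h1, h2⟩ | ⟨h1, h2⟩
  · subst h2; push_cast; linarith
  · -- L' = ⌈(L+1)/2⌉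
    have hL1 : ((L + 1 : ℕ) : ℝ) = (L : ℝ) + 1 := by push_cast; ring
    rw [← hL1, ceil_half_nat (L + 1)] at h2
    have hL' : L' = (L + 2) / 2 := by exact_mod_cast h2
    suffices h : (L' : ℝ) ≤ α * m by linarith
    have hdiv : (L' : ℝ) ≤ ((L : ℝ) + 2) / 2 := by
      have hn : L' * 2 ≤ L + 2 := by rw [hL']; exact Nat.div_mul_le_self _ _
      have : (L' : ℝ) * 2 ≤ (L : ℝ) + 2 := by exact_mod_cast hn
      linarith
    by_cases hbig : 2 ≤ (α - 2) * m
    · have : ((L : ℝ) + 2) / 2 ≤ α * m := by nlinarith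
      linarith
    · -- then m = 1 and α < 4
      have hm1 : m = 1 := by
        by_contra hne
        have : (2 : ℝ) ≤ (m : ℝ) := by
          have : 2 ≤ m := by omega
          exact_mod_cast this
        nlinarith
      subst hm1
      have hα4 : α < 4 := by push_cast at hbig ⊢; linarith
      -- L ≤ 5
      have hL5 : L ≤ 5 := by
        by_contra hne
        have : (6 : ℝ) ≤ (L : ℝ) := by
          have : 6 ≤ L := by omega
          exact_mod_cast this
        push_cast at hinv
        linarith
      have : L' ≤ 3 := by omega
      have : (L' : ℝ) ≤ 3 := by exact_mod_cast this
      push_cast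
      linarith
end
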